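/- arXiv:math/0609667 — 2 statements merged into one kernel-verified Lean document; each statement's English description precedes it below -/
import Mathlib

section
/- Let Ω = ℝ² × [-L, L]. For every φ ∈ H¹(Ω), the quantity (∫_{ℝ²} (∫_{-L}^{L} |φ(x₁,x₂,x₃)|² dx₃)² dx₁dx₂)^{1/4} is bounded by C · (‖φ‖_{L²(Ω)} + ‖∇_h φ‖_{L²(Ω)})^{1/2} · ‖φ‖_{L²(Ω)}^{1/2}, where ∇_h = (∂/∂x₁, ∂/∂x₂) denotes the horizontal gradient and C is a universal constant. -/
open MeasureTheory

noncomputable section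

/-- The infinite channel `Ω = ℝ² × [-L, L]`, as a subset of `ℝ × ℝ × ℝ`. -/
def chan (L : ℝ) : Set (ℝ × ℝ × ℝ) := {p | p.2.2 ∈ Set.Icc (-L) L}

/-- Coordinate directions in `ℝ³ = ℝ × ℝ × ℝ`. -/
def e3 : Fin 3 → ℝ × ℝ × ℝ
  | 0 => (1, 0, 0)
  | 1 => (0, 1, 0)
  | 2 => (0, 0, 1)

/-- Partial derivative `∂f/∂xᵢ`. -/
def pd (i : Fin 3) (f : ℝ × ℝ × ℝ → ℝ) (p : ℝ × ℝ × ℝ) : ℝ := fderiv ℝ f p (e3 i)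

namespace Stmt0Aux

open scoped ENNReal

lemma hasDerivAt_line0 {φ : ℝ × ℝ × ℝ → ℝ} (hφ : Differentiable ℝ φ) (x₂ z t : ℝ) :
    HasDerivAt (fun s => φ (s, x₂, z) ^ 2)
      (2 * (φ (t, x₂, z) * pd 0 φ (t, x₂, z))) t := by
  have hline : HasDerivAt (fun s : ℝ => ((s, x₂, z) : ℝ × ℝ × ℝ)) ((1, 0, 0) : ℝ × ℝ × ℝ) t := by
    have := (hasDerivAt_id t).prodMk (hasDerivAt_const t ((x₂, z) : ℝ × ℝ))
    exact this
  have h1 : HasDerivAt (fun s => φ (s, x₂, z)) (pd 0 φ (t, x₂, z)) t := by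
    have := (hφ (t, x₂, z)).hasFDerivAt.comp_hasDerivAt t hline
    exact this
  have := h1.fun_pow 2
  refine this.congr_deriv ?_
  simp [pd]
  ring

lemma hasDerivAt_line1 {φ : ℝ × ℝ × ℝ → ℝ} (hφ : Differentiable ℝ φ) (x₁ z t : ℝ) :
    HasDerivAt (fun s => φ (x₁, s, z) ^ 2)
      (2 * (φ (x₁, t, z) * pd 1 φ (x₁, t, z))) t := by
  have hline : HasDerivAt (fun s : ℝ => ((x₁, s, z) : ℝ × ℝ × ℝ)) ((0, 1, 0) : ℝ × ℝ × ℝ) t := by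
    have := (hasDerivAt_const t x₁).prodMk ((hasDerivAt_id t).prodMk (hasDerivAt_const t z))
    exact this
  have h1 : HasDerivAt (fun s => φ (x₁, s, z)) (pd 1 φ (x₁, t, z)) t := by
    have := (hφ (x₁, t, z)).hasFDerivAt.comp_hasDerivAt t hline
    exact this
  have := h1.fun_pow 2
  refine this.congr_deriv ?_
  simp [pd]
  ring

lemma line_bound {g G : ℝ → ℝ}
    (hd : ∀ t, HasDerivAt (fun s => g s ^ 2) (2 * G t) t)
    (hi : Integrable G (volume : Measure ℝ)) (a b : ℝ) :
    g b ^ 2 ≤ g a ^ 2 + ∫ t, 2 * |G t| := by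
  have hint : IntervalIntegrable (fun t => 2 * G t) volume a b :=
    (hi.const_mul 2).intervalIntegrable
  have hftc : (∫ t in a..b, 2 * G t) = g b ^ 2 - g a ^ 2 :=
    intervalIntegral.integral_eq_sub_of_hasDerivAt (fun t _ => hd t) hint
  have habs : |∫ t in a..b, 2 * G t| ≤ ∫ t, 2 * |G t| := by
    have h1 : |∫ t in a..b, G t| ≤ ∫ t in Set.uIoc a b, |G t| := by
      simpa [Real.norm_eq_abs] using
        (intervalIntegral.norm_integral_le_integral_norm_uIoc
          (f := fun t => G t) (a := a) (b := b) (μ := volume))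
    have h2 : (∫ t in Set.uIoc a b, |G t|) ≤ ∫ t, |G t| :=
      setIntegral_le_integral hi.abs (Filter.Eventually.of_forall fun t => abs_nonneg _)
    have h3 : (∫ t, 2 * |G t|) = 2 * ∫ t, |G t| := by
      rw [MeasureTheory.integral_const_mul]
    have h4 : (∫ t in a..b, 2 * G t) = 2 * ∫ t in a..b, G t := by
      rw [intervalIntegral.integral_const_mul]
    rw [h4, h3, abs_mul]
    have : |(2:ℝ)| = 2 := by norm_num
    rw [this]
    nlinarith [abs_nonneg (∫ t in a..b, G t)]
  have := abs_le.1 habs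
  linarith [hftc]



section Main

/-- The z-restricted measure. -/
def nu (L : ℝ) : Measure ℝ := (volume : Measure ℝ).restrict (Set.Icc (-L) L)

/-- The triple product measure corresponding to `volume.restrict (chan L)`. -/
def mu3 (L : ℝ) : Measure (ℝ × ℝ × ℝ) :=
  (volume : Measure ℝ).prod ((volume : Measure ℝ).prod (nu L))

instance (L : ℝ) : SigmaFinite (nu L) := by
  unfold nu; infer_instance

lemma restrict_chan (L : ℝ) :
    (volume : Measure (ℝ × ℝ × ℝ)).restrict (chan L) = mu3 L := by
  have hset : chan L = (Set.univ : Set ℝ) ×ˢ ((Set.univ : Set ℝ) ×ˢ Set.Icc (-L) L) := by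
    ext p; simp [chan]
  rw [hset, mu3, nu]
  rw [Measure.volume_eq_prod, ← Measure.prod_restrict, Measure.restrict_univ]
  congr 1
  rw [Measure.volume_eq_prod, ← Measure.prod_restrict, Measure.restrict_univ]

lemma measurable_pd (i : Fin 3) (φ : ℝ × ℝ × ℝ → ℝ) : Measurable (pd i φ) :=
  measurable_fderiv_apply_const ℝ φ (e3 i)

/-- The function `W x = ∫_{-L}^L φ(x₁,x₂,z)² dz` (as an `ℝ≥0∞`-valued integral). -/
def W (φ : ℝ × ℝ × ℝ → ℝ) (L : ℝ) : ℝ × ℝ → ℝ≥0∞ :=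
  fun x => ∫⁻ z, ENNReal.ofReal (φ (x.1, x.2, z) ^ 2) ∂(nu L)

lemma measurable_W {φ : ℝ × ℝ × ℝ → ℝ} (hφc : Continuous φ) (L : ℝ) :
    Measurable (W φ L) := by
  unfold W
  apply Measurable.lintegral_prod_right' (f := fun q : (ℝ × ℝ) × ℝ =>
    ENNReal.ofReal (φ (q.1.1, q.1.2, q.2) ^ 2))
  apply Measurable.ennreal_ofReal
  have : Continuous fun q : (ℝ × ℝ) × ℝ => φ (q.1.1, q.1.2, q.2) :=
    hφc.comp (by fun_prop)
  exact (this.pow 2).measurable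

lemma tonelli3 {L : ℝ} {f : ℝ × ℝ × ℝ → ℝ≥0∞} (hf : Measurable f) :
    ∫⁻ p, f p ∂(mu3 L) = ∫⁻ x₁, ∫⁻ x₂, ∫⁻ z, f (x₁, x₂, z) ∂(nu L) := by
  rw [mu3, lintegral_prod _ hf.aemeasurable]
  congr 1; funext x₁
  exact lintegral_prod _ (hf.comp (measurable_prodMk_left (x := x₁))).aemeasurable

lemma tonelli3' {L : ℝ} {f : ℝ × ℝ × ℝ → ℝ≥0∞} (hf : Measurable f) :
    ∫⁻ p, f p ∂(mu3 L) = ∫⁻ x₂, (∫⁻ z, (∫⁻ x₁, f (x₁, x₂, z)) ∂(nu L)) := by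
  rw [mu3, lintegral_prod_symm _ hf.aemeasurable]
  exact lintegral_prod _ (Measurable.lintegral_prod_left' (μ := (volume : Measure ℝ)) hf).aemeasurable

lemma tonelli3'' {L : ℝ} {f : ℝ × ℝ × ℝ → ℝ≥0∞} (hf : Measurable f) :
    ∫⁻ p, f p ∂(mu3 L) = ∫⁻ x₁, (∫⁻ z, (∫⁻ x₂, f (x₁, x₂, z)) ∂(nu L)) := by
  rw [mu3, lintegral_prod _ hf.aemeasurable]
  congr 1; funext x₁
  exact lintegral_prod_symm _ ((hf.comp (measurable_prodMk_left (x := x₁)))).aemeasurable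

/-- Total horizontal-derivative "energy" in direction 0, as seen from `x₂`. -/
def E0 (φ : ℝ × ℝ × ℝ → ℝ) (L : ℝ) (x₂ : ℝ) : ℝ≥0∞ :=
  ∫⁻ z, (∫⁻ t, ENNReal.ofReal (2 * |φ (t, x₂, z) * pd 0 φ (t, x₂, z)|)) ∂(nu L)

def E1 (φ : ℝ × ℝ × ℝ → ℝ) (L : ℝ) (x₁ : ℝ) : ℝ≥0∞ :=
  ∫⁻ z, (∫⁻ s, ENNReal.ofReal (2 * |φ (x₁, s, z) * pd 1 φ (x₁, s, z)|)) ∂(nu L)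

lemma key0 {φ : ℝ × ℝ × ℝ → ℝ} {L : ℝ} (hφ : Differentiable ℝ φ)
    (hG : Integrable (fun p => φ p * pd 0 φ p) (mu3 L))
    (hA : (∫⁻ p, ENNReal.ofReal (φ p ^ 2) ∂(mu3 L)) ≠ ⊤) :
    ∀ᵐ x₂ ∂(volume : Measure ℝ), ∀ x₁, W φ L (x₁, x₂) ≤ E0 φ L x₂ := by
  have hφc : Continuous φ := hφ.continuous
  have hWm : Measurable (W φ L) := measurable_W hφc L
  -- (c1) a.e. slice integrability of `φ ∂₁φ` along horizontal lines
  have c1 : ∀ᵐ x₂ ∂(volume : Measure ℝ), ∀ᵐ z ∂(nu L),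
      Integrable (fun t => φ (t, x₂, z) * pd 0 φ (t, x₂, z)) volume := by
    have h := hG.prod_left_ae
    exact Measure.ae_ae_of_ae_prod h
  -- (c2) finiteness of the `x₁`-integral of `W` for a.e. `x₂`
  have c2 : ∀ᵐ x₂ ∂(volume : Measure ℝ), (∫⁻ x₁, W φ L (x₁, x₂)) ≠ ⊤ := by
    have hfm : Measurable fun p : ℝ × ℝ × ℝ => ENNReal.ofReal (φ p ^ 2) :=
      ((hφc.pow 2).measurable).ennreal_ofReal
    have hrep : (∫⁻ p, ENNReal.ofReal (φ p ^ 2) ∂(mu3 L))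
        = ∫⁻ x₂, ∫⁻ x₁, W φ L (x₁, x₂) := by
      rw [tonelli3 hfm]
      exact lintegral_lintegral_swap (f := fun x₁ x₂ => W φ L (x₁, x₂)) hWm.aemeasurable
    rw [hrep] at hA
    have hmeas : Measurable fun x₂ => ∫⁻ x₁, W φ L (x₁, x₂) :=
      Measurable.lintegral_prod_right' (f := fun q : ℝ × ℝ => W φ L (q.2, q.1))
        (hWm.comp measurable_swap)
    filter_upwards [ae_lt_top hmeas hA] with x₂ h using h.ne
  filter_upwards [c1, c2] with x₂ hc1 hc2
  intro x₁
  rcases eq_top_or_lt_top (E0 φ L x₂) with hE | hE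
  · rw [hE]; exact le_top
  apply ENNReal.le_of_forall_pos_le_add
  intro ε hε _
  -- choose a base point `a` where `W` is small
  have hex : ∃ a : ℝ, W φ L (a, x₂) ≤ (ε : ℝ≥0∞) := by
    by_contra hcon
    push_neg at hcon
    apply hc2
    have hle : (∫⁻ _ : ℝ, (ε : ℝ≥0∞)) ≤ ∫⁻ x₁, W φ L (x₁, x₂) :=
      lintegral_mono fun a => (hcon a).le
    rw [lintegral_const, Real.volume_univ, ENNReal.mul_top (by exact_mod_cast hε.ne')] at hle
    exact top_le_iff.mp hle
  obtain ⟨a, ha⟩ := hex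
  have step : W φ L (x₁, x₂) ≤ W φ L (a, x₂) + E0 φ L x₂ := by
    have hmono : ∀ᵐ z ∂(nu L), ENNReal.ofReal (φ (x₁, x₂, z) ^ 2)
        ≤ ENNReal.ofReal (φ (a, x₂, z) ^ 2)
          + ∫⁻ t, ENNReal.ofReal (2 * |φ (t, x₂, z) * pd 0 φ (t, x₂, z)|) := by
      filter_upwards [hc1] with z hz
      have hlb := line_bound (g := fun s => φ (s, x₂, z))
        (G := fun t => φ (t, x₂, z) * pd 0 φ (t, x₂, z))
        (fun t => hasDerivAt_line0 hφ x₂ z t) hz a x₁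
      have heq : ENNReal.ofReal (∫ t, 2 * |φ (t, x₂, z) * pd 0 φ (t, x₂, z)|)
          = ∫⁻ t, ENNReal.ofReal (2 * |φ (t, x₂, z) * pd 0 φ (t, x₂, z)|) :=
        ofReal_integral_eq_lintegral_ofReal (hz.abs.const_mul 2)
          (Filter.Eventually.of_forall fun t => by positivity)
      calc ENNReal.ofReal (φ (x₁, x₂, z) ^ 2)
          ≤ ENNReal.ofReal (φ (a, x₂, z) ^ 2 + ∫ t, 2 * |φ (t, x₂, z) * pd 0 φ (t, x₂, z)|) :=
            ENNReal.ofReal_le_ofReal hlb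
        _ = ENNReal.ofReal (φ (a, x₂, z) ^ 2)
            + ENNReal.ofReal (∫ t, 2 * |φ (t, x₂, z) * pd 0 φ (t, x₂, z)|) :=
            ENNReal.ofReal_add (sq_nonneg _)
              (integral_nonneg fun t => by positivity)
        _ = _ := by rw [heq]
    calc W φ L (x₁, x₂) ≤ ∫⁻ z, (ENNReal.ofReal (φ (a, x₂, z) ^ 2)
          + ∫⁻ t, ENNReal.ofReal (2 * |φ (t, x₂, z) * pd 0 φ (t, x₂, z)|)) ∂(nu L) :=
        lintegral_mono_ae hmono
      _ = W φ L (a, x₂) + E0 φ L x₂ := by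
        rw [lintegral_add_left]
        · rfl
        · exact ((hφc.comp (by fun_prop : Continuous fun z : ℝ =>
            ((a, x₂, z) : ℝ × ℝ × ℝ))).pow 2).measurable.ennreal_ofReal
  calc W φ L (x₁, x₂) ≤ W φ L (a, x₂) + E0 φ L x₂ := step
    _ ≤ (ε : ℝ≥0∞) + E0 φ L x₂ := add_le_add_left ha _
    _ = E0 φ L x₂ + ε := add_comm _ _

lemma key1 {φ : ℝ × ℝ × ℝ → ℝ} {L : ℝ} (hφ : Differentiable ℝ φ)
    (hG : Integrable (fun p => φ p * pd 1 φ p) (mu3 L))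
    (hA : (∫⁻ p, ENNReal.ofReal (φ p ^ 2) ∂(mu3 L)) ≠ ⊤) :
    ∀ᵐ x₁ ∂(volume : Measure ℝ), ∀ x₂, W φ L (x₁, x₂) ≤ E1 φ L x₁ := by
  have hφc : Continuous φ := hφ.continuous
  have hWm : Measurable (W φ L) := measurable_W hφc L
  have c1 : ∀ᵐ x₁ ∂(volume : Measure ℝ), ∀ᵐ z ∂(nu L),
      Integrable (fun s => φ (x₁, s, z) * pd 1 φ (x₁, s, z)) volume := by
    filter_upwards [hG.prod_right_ae] with x₁ h using h.prod_left_ae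
  have c2 : ∀ᵐ x₁ ∂(volume : Measure ℝ), (∫⁻ x₂, W φ L (x₁, x₂)) ≠ ⊤ := by
    have hfm : Measurable fun p : ℝ × ℝ × ℝ => ENNReal.ofReal (φ p ^ 2) :=
      ((hφc.pow 2).measurable).ennreal_ofReal
    have hrep : (∫⁻ p, ENNReal.ofReal (φ p ^ 2) ∂(mu3 L))
        = ∫⁻ x₁, ∫⁻ x₂, W φ L (x₁, x₂) := tonelli3 hfm
    rw [hrep] at hA
    have hmeas : Measurable fun x₁ => ∫⁻ x₂, W φ L (x₁, x₂) :=
      Measurable.lintegral_prod_right' (f := W φ L) hWm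
    filter_upwards [ae_lt_top hmeas hA] with x₁ h using h.ne
  filter_upwards [c1, c2] with x₁ hc1 hc2
  intro x₂
  rcases eq_top_or_lt_top (E1 φ L x₁) with hE | hE
  · rw [hE]; exact le_top
  apply ENNReal.le_of_forall_pos_le_add
  intro ε hε _
  have hex : ∃ a : ℝ, W φ L (x₁, a) ≤ (ε : ℝ≥0∞) := by
    by_contra hcon
    push_neg at hcon
    apply hc2
    have hle : (∫⁻ _ : ℝ, (ε : ℝ≥0∞)) ≤ ∫⁻ x₂, W φ L (x₁, x₂) :=
      lintegral_mono fun a => (hcon a).le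
    rw [lintegral_const, Real.volume_univ, ENNReal.mul_top (by exact_mod_cast hε.ne')] at hle
    exact top_le_iff.mp hle
  obtain ⟨a, ha⟩ := hex
  have step : W φ L (x₁, x₂) ≤ W φ L (x₁, a) + E1 φ L x₁ := by
    have hmono : ∀ᵐ z ∂(nu L), ENNReal.ofReal (φ (x₁, x₂, z) ^ 2)
        ≤ ENNReal.ofReal (φ (x₁, a, z) ^ 2)
          + ∫⁻ s, ENNReal.ofReal (2 * |φ (x₁, s, z) * pd 1 φ (x₁, s, z)|) := by
      filter_upwards [hc1] with z hz
      have hlb := line_bound (g := fun s => φ (x₁, s, z))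
        (G := fun s => φ (x₁, s, z) * pd 1 φ (x₁, s, z))
        (fun t => hasDerivAt_line1 hφ x₁ z t) hz a x₂
      have heq : ENNReal.ofReal (∫ s, 2 * |φ (x₁, s, z) * pd 1 φ (x₁, s, z)|)
          = ∫⁻ s, ENNReal.ofReal (2 * |φ (x₁, s, z) * pd 1 φ (x₁, s, z)|) :=
        ofReal_integral_eq_lintegral_ofReal (hz.abs.const_mul 2)
          (Filter.Eventually.of_forall fun t => by positivity)
      calc ENNReal.ofReal (φ (x₁, x₂, z) ^ 2)
          ≤ ENNReal.ofReal (φ (x₁, a, z) ^ 2 + ∫ s, 2 * |φ (x₁, s, z) * pd 1 φ (x₁, s, z)|) :=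
            ENNReal.ofReal_le_ofReal hlb
        _ = ENNReal.ofReal (φ (x₁, a, z) ^ 2)
            + ENNReal.ofReal (∫ s, 2 * |φ (x₁, s, z) * pd 1 φ (x₁, s, z)|) :=
            ENNReal.ofReal_add (sq_nonneg _)
              (integral_nonneg fun t => by positivity)
        _ = _ := by rw [heq]
    calc W φ L (x₁, x₂) ≤ ∫⁻ z, (ENNReal.ofReal (φ (x₁, a, z) ^ 2)
          + ∫⁻ s, ENNReal.ofReal (2 * |φ (x₁, s, z) * pd 1 φ (x₁, s, z)|)) ∂(nu L) :=
        lintegral_mono_ae hmono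
      _ = W φ L (x₁, a) + E1 φ L x₁ := by
        rw [lintegral_add_left]
        · rfl
        · exact ((hφc.comp (by fun_prop : Continuous fun z : ℝ =>
            ((x₁, a, z) : ℝ × ℝ × ℝ))).pow 2).measurable.ennreal_ofReal
  calc W φ L (x₁, x₂) ≤ W φ L (x₁, a) + E1 φ L x₁ := step
    _ ≤ (ε : ℝ≥0∞) + E1 φ L x₁ := add_le_add_left ha _
    _ = E1 φ L x₁ + ε := add_comm _ _

lemma holder_bound {μ : Measure (ℝ × ℝ × ℝ)} {u v : ℝ × ℝ × ℝ → ℝ}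
    (hu : Measurable u) (hv : Measurable v) :
    ∫⁻ p, ENNReal.ofReal (2 * |u p * v p|) ∂μ
      ≤ 2 * (∫⁻ p, ENNReal.ofReal (u p ^ 2) ∂μ) ^ ((1 : ℝ) / 2)
          * (∫⁻ p, ENNReal.ofReal (v p ^ 2) ∂μ) ^ ((1 : ℝ) / 2) := by
  have habs : ∀ x : ℝ, (ENNReal.ofReal |x|) ^ (2 : ℝ) = ENNReal.ofReal (x ^ 2) := by
    intro x
    rw [ENNReal.ofReal_rpow_of_nonneg (abs_nonneg x) (by norm_num)]
    congr 1
    rw [show ((2:ℝ) = ((2:ℕ):ℝ)) by norm_num, Real.rpow_natCast, sq_abs]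
  have h1 : ∀ p, ENNReal.ofReal (2 * |u p * v p|)
      = 2 * (ENNReal.ofReal |u p| * ENNReal.ofReal |v p|) := by
    intro p
    rw [ENNReal.ofReal_mul (by norm_num : (0:ℝ) ≤ 2), abs_mul,
      ENNReal.ofReal_mul (abs_nonneg _)]
    norm_num
  simp_rw [h1]
  rw [lintegral_const_mul]
  · have hconj : Real.HolderConjugate 2 2 := Real.HolderConjugate.two_two
    have := ENNReal.lintegral_mul_le_Lp_mul_Lq μ hconj
      (f := fun p => ENNReal.ofReal |u p|) (g := fun p => ENNReal.ofReal |v p|)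
      (hu.abs.ennreal_ofReal.aemeasurable) (hv.abs.ennreal_ofReal.aemeasurable)
    simp only [Pi.mul_apply] at this
    rw [mul_assoc]
    refine mul_le_mul_right (this.trans (le_of_eq ?_)) 2
    congr 1
    · congr 1
      exact lintegral_congr fun p => habs (u p)
    · congr 1
      exact lintegral_congr fun p => habs (v p)
  · exact (hu.abs.ennreal_ofReal).mul (hv.abs.ennreal_ofReal)

end Main
end Stmt0Aux

open Stmt0Aux
open scoped ENNReal

/-- (∫_{ℝ²} (∫_{-L}^{L} |φ|² dx₃)² dx₁dx₂)^{1/4}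
    ≤ C (‖φ‖_{L²(Ω)} + ‖∇_h φ‖_{L²(Ω)})^{1/2} ‖φ‖_{L²(Ω)}^{1/2}. -/
theorem stmt0 :
    ∃ C : ℝ, 0 < C ∧
      ∀ (L : ℝ), 0 < L →
      ∀ φ : ℝ × ℝ × ℝ → ℝ, Differentiable ℝ φ →
        IntegrableOn (fun p => (φ p) ^ 2) (chan L) →
        IntegrableOn (fun p => (pd 0 φ p) ^ 2 + (pd 1 φ p) ^ 2 + (pd 2 φ p) ^ 2) (chan L) →
        (∫⁻ x : ℝ × ℝ,
            (∫⁻ z in Set.Icc (-L) L, ENNReal.ofReal ((φ (x.1, x.2, z)) ^ 2)) ^ (2 : ℝ))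
              ^ ((1 : ℝ) / 4)
          ≤ ENNReal.ofReal
              (C * (Real.sqrt (∫ p in chan L, (φ p) ^ 2)
                      + Real.sqrt (∫ p in chan L, (pd 0 φ p) ^ 2 + (pd 1 φ p) ^ 2))
                    ^ ((1 : ℝ) / 2)
                 * (∫ p in chan L, (φ p) ^ 2) ^ ((1 : ℝ) / 4)) := by
  refine ⟨2, by norm_num, ?_⟩
  intro L hL φ hφ h1 h2
  have hφc : Continuous φ := hφ.continuous
  have hfm : Measurable fun p : ℝ × ℝ × ℝ => ENNReal.ofReal (φ p ^ 2) :=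
    ((hφc.pow 2).measurable).ennreal_ofReal
  have h1' : Integrable (fun p => φ p ^ 2) (mu3 L) := by
    rw [← restrict_chan L]; exact h1
  have h2' : Integrable
      (fun p => (pd 0 φ p) ^ 2 + (pd 1 φ p) ^ 2 + (pd 2 φ p) ^ 2) (mu3 L) := by
    rw [← restrict_chan L]; exact h2
  set a : ℝ := ∫ p in chan L, φ p ^ 2 with hadef
  set b : ℝ := ∫ p in chan L, (pd 0 φ p) ^ 2 + (pd 1 φ p) ^ 2 with hbdef
  have ha0 : 0 ≤ a := integral_nonneg fun p => sq_nonneg _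
  have hb0 : 0 ≤ b := integral_nonneg fun p => by positivity
  -- `A` and `B`
  set A : ℝ≥0∞ := ENNReal.ofReal a with hAdef
  set B : ℝ≥0∞ := ENNReal.ofReal b with hBdef
  have hA : (∫⁻ p, ENNReal.ofReal (φ p ^ 2) ∂(mu3 L)) = A := by
    rw [hAdef, hadef, ← restrict_chan L]
    exact (ofReal_integral_eq_lintegral_ofReal h1
      (Filter.Eventually.of_forall fun p => sq_nonneg _)).symm
  have hAne : (∫⁻ p, ENNReal.ofReal (φ p ^ 2) ∂(mu3 L)) ≠ ⊤ := by
    rw [hA]; exact ENNReal.ofReal_ne_top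
  have hpd0m : Measurable (pd 0 φ) := measurable_pd 0 φ
  have hpd1m : Measurable (pd 1 φ) := measurable_pd 1 φ
  have hbint : Integrable (fun p => (pd 0 φ p) ^ 2 + (pd 1 φ p) ^ 2) (mu3 L) := by
    apply h2'.mono' (((hpd0m.pow_const 2).add (hpd1m.pow_const 2)).aestronglyMeasurable)
    refine Filter.Eventually.of_forall fun p => ?_
    simp only [Pi.add_apply]
    rw [Real.norm_eq_abs, abs_of_nonneg (by positivity)]
    nlinarith [sq_nonneg (pd 2 φ p)]
  have hB : (∫⁻ p, ENNReal.ofReal ((pd 0 φ p) ^ 2 + (pd 1 φ p) ^ 2) ∂(mu3 L)) = B := by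
    rw [hBdef, hbdef, ← restrict_chan L]
    refine (ofReal_integral_eq_lintegral_ofReal ?_
      (Filter.Eventually.of_forall fun p => by positivity)).symm
    rw [restrict_chan L]; exact hbint
  have hB0 : (∫⁻ p, ENNReal.ofReal ((pd 0 φ p) ^ 2) ∂(mu3 L)) ≤ B := by
    rw [← hB]
    exact lintegral_mono fun p => ENNReal.ofReal_le_ofReal (by nlinarith [sq_nonneg (pd 1 φ p)])
  have hB1 : (∫⁻ p, ENNReal.ofReal ((pd 1 φ p) ^ 2) ∂(mu3 L)) ≤ B := by
    rw [← hB]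
    exact lintegral_mono fun p => ENNReal.ofReal_le_ofReal (by nlinarith [sq_nonneg (pd 0 φ p)])
  -- integrability of φ·∂ᵢφ
  have hGint0 : Integrable (fun p => φ p * pd 0 φ p) (mu3 L) := by
    apply (h1'.add h2').mono' ((hφc.measurable.mul hpd0m).aestronglyMeasurable)
    refine Filter.Eventually.of_forall fun p => ?_
    simp only [Pi.add_apply, Pi.mul_apply]
    rw [Real.norm_eq_abs, abs_mul]
    nlinarith [sq_nonneg (|φ p| - |pd 0 φ p|), sq_abs (φ p), sq_abs (pd 0 φ p),
      abs_nonneg (φ p), abs_nonneg (pd 0 φ p), sq_nonneg (pd 1 φ p), sq_nonneg (pd 2 φ p)]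
  have hGint1 : Integrable (fun p => φ p * pd 1 φ p) (mu3 L) := by
    apply (h1'.add h2').mono' ((hφc.measurable.mul hpd1m).aestronglyMeasurable)
    refine Filter.Eventually.of_forall fun p => ?_
    simp only [Pi.add_apply, Pi.mul_apply]
    rw [Real.norm_eq_abs, abs_mul]
    nlinarith [sq_nonneg (|φ p| - |pd 1 φ p|), sq_abs (φ p), sq_abs (pd 1 φ p),
      abs_nonneg (φ p), abs_nonneg (pd 1 φ p), sq_nonneg (pd 0 φ p), sq_nonneg (pd 2 φ p)]
  -- key a.e. bounds
  have hkey0 := key0 hφ hGint0 hAne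
  have hkey1 := key1 hφ hGint1 hAne
  -- measurability of the various integrands
  have hq0m : Measurable fun p : ℝ × ℝ × ℝ => ENNReal.ofReal (2 * |φ p * pd 0 φ p|) :=
    (((hφc.measurable.mul hpd0m).abs).const_mul 2).ennreal_ofReal
  have hq1m : Measurable fun p : ℝ × ℝ × ℝ => ENNReal.ofReal (2 * |φ p * pd 1 φ p|) :=
    (((hφc.measurable.mul hpd1m).abs).const_mul 2).ennreal_ofReal
  have hE0m : Measurable (E0 φ L) := by
    unfold E0
    exact Measurable.lintegral_prod_right'
      (f := fun q : ℝ × ℝ =>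
        ∫⁻ t, ENNReal.ofReal (2 * |φ (t, q.1, q.2) * pd 0 φ (t, q.1, q.2)|))
      (Measurable.lintegral_prod_left' (f := fun r : ℝ × ℝ × ℝ =>
        ENNReal.ofReal (2 * |φ (r.1, r.2.1, r.2.2) * pd 0 φ (r.1, r.2.1, r.2.2)|))
        (by exact hq0m.comp (by fun_prop)))
  have hE1m : Measurable (E1 φ L) := by
    unfold E1
    exact Measurable.lintegral_prod_right'
      (f := fun q : ℝ × ℝ =>
        ∫⁻ s, ENNReal.ofReal (2 * |φ (q.1, s, q.2) * pd 1 φ (q.1, s, q.2)|))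
      (Measurable.lintegral_prod_left' (f := fun r : ℝ × (ℝ × ℝ) =>
        ENNReal.ofReal (2 * |φ (r.2.1, r.1, r.2.2) * pd 1 φ (r.2.1, r.1, r.2.2)|))
        (by exact hq1m.comp (by fun_prop)))
  -- totals
  have htot0 : (∫⁻ x₂, E0 φ L x₂) = ∫⁻ p, ENNReal.ofReal (2 * |φ p * pd 0 φ p|) ∂(mu3 L) :=
    (tonelli3' hq0m).symm
  have htot1 : (∫⁻ x₁, E1 φ L x₁) = ∫⁻ p, ENNReal.ofReal (2 * |φ p * pd 1 φ p|) ∂(mu3 L) :=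
    (tonelli3'' hq1m).symm
  have hbound0 : (∫⁻ x₂, E0 φ L x₂) ≤ 2 * A ^ ((1:ℝ)/2) * B ^ ((1:ℝ)/2) := by
    rw [htot0]
    refine (holder_bound hφc.measurable hpd0m).trans ?_
    rw [hA]
    exact mul_le_mul_right (ENNReal.rpow_le_rpow hB0 (by norm_num)) _
  have hbound1 : (∫⁻ x₁, E1 φ L x₁) ≤ 2 * A ^ ((1:ℝ)/2) * B ^ ((1:ℝ)/2) := by
    rw [htot1]
    refine (holder_bound hφc.measurable hpd1m).trans ?_
    rw [hA]
    exact mul_le_mul_right (ENNReal.rpow_le_rpow hB1 (by norm_num)) _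
  -- lift the key bounds to the product
  have lift0 : ∀ᵐ x ∂((volume : Measure ℝ).prod (volume : Measure ℝ)),
      ∀ x₁, W φ L (x₁, x.2) ≤ E0 φ L x.2 :=
    (Measure.quasiMeasurePreserving_snd).ae hkey0
  have lift1 : ∀ᵐ x ∂((volume : Measure ℝ).prod (volume : Measure ℝ)),
      ∀ x₂, W φ L (x.1, x₂) ≤ E1 φ L x.1 :=
    (Measure.quasiMeasurePreserving_fst).ae hkey1
  have main2 : (∫⁻ x, (W φ L x) ^ (2 : ℝ) ∂((volume : Measure ℝ).prod (volume : Measure ℝ)))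
      ≤ (2 * A ^ ((1:ℝ)/2) * B ^ ((1:ℝ)/2)) * (2 * A ^ ((1:ℝ)/2) * B ^ ((1:ℝ)/2)) := by
    have step1 : (∫⁻ x, (W φ L x) ^ (2 : ℝ) ∂((volume : Measure ℝ).prod (volume : Measure ℝ)))
        ≤ ∫⁻ x, E1 φ L x.1 * E0 φ L x.2
            ∂((volume : Measure ℝ).prod (volume : Measure ℝ)) := by
      refine lintegral_mono_ae ?_
      filter_upwards [lift0, lift1] with x hx0 hx1
      rw [ENNReal.rpow_two, sq]
      calc W φ L x * W φ L x = W φ L (x.1, x.2) * W φ L (x.1, x.2) := by rw [Prod.mk.eta]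
        _ ≤ E1 φ L x.1 * E0 φ L x.2 := mul_le_mul' (hx1 x.2) (hx0 x.1)
    refine step1.trans ?_
    rw [lintegral_prod_mul hE1m.aemeasurable hE0m.aemeasurable]
    exact mul_le_mul' hbound1 hbound0
  -- identify the LHS with the product-measure integral
  have hLHSrep : (∫⁻ x : ℝ × ℝ,
        (∫⁻ z in Set.Icc (-L) L, ENNReal.ofReal ((φ (x.1, x.2, z)) ^ 2)) ^ (2 : ℝ))
      = ∫⁻ x, (W φ L x) ^ (2 : ℝ) ∂((volume : Measure ℝ).prod (volume : Measure ℝ)) := rfl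
  rw [hLHSrep]
  -- final numeric computation
  have hfinal : ((2 * A ^ ((1:ℝ)/2) * B ^ ((1:ℝ)/2))
        * (2 * A ^ ((1:ℝ)/2) * B ^ ((1:ℝ)/2))) ^ ((1:ℝ)/4)
      ≤ ENNReal.ofReal (2 * (Real.sqrt a + Real.sqrt b) ^ ((1:ℝ)/2) * a ^ ((1:ℝ)/4)) := by
    set u : ℝ≥0∞ := A ^ ((1:ℝ)/2) with hudef
    set v : ℝ≥0∞ := B ^ ((1:ℝ)/2) with hvdef
    have hRHS : ENNReal.ofReal (2 * (Real.sqrt a + Real.sqrt b) ^ ((1:ℝ)/2) * a ^ ((1:ℝ)/4))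
        = 2 * (u + v) ^ ((1:ℝ)/2) * A ^ ((1:ℝ)/4) := by
      rw [ENNReal.ofReal_mul (by positivity), ENNReal.ofReal_mul (by norm_num)]
      congr 1
      · congr 1
        · norm_num
        · rw [← ENNReal.ofReal_rpow_of_nonneg (by positivity) (by norm_num)]
          congr 1
          rw [ENNReal.ofReal_add (Real.sqrt_nonneg a) (Real.sqrt_nonneg b)]
          congr 1
          · rw [Real.sqrt_eq_rpow, ← ENNReal.ofReal_rpow_of_nonneg ha0 (by norm_num)]
          · rw [Real.sqrt_eq_rpow, ← ENNReal.ofReal_rpow_of_nonneg hb0 (by norm_num)]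
      · rw [← ENNReal.ofReal_rpow_of_nonneg ha0 (by norm_num)]
    rw [hRHS]
    have hmid : ((2 * u * v) * (2 * u * v)) ^ ((1:ℝ)/4) = (2 * u * v) ^ ((1:ℝ)/2) := by
      rw [← sq, ← ENNReal.rpow_two, ← ENNReal.rpow_mul]
      norm_num
    rw [hmid, ENNReal.mul_rpow_of_nonneg _ _ (by norm_num : (0:ℝ) ≤ 1/2),
      ENNReal.mul_rpow_of_nonneg _ _ (by norm_num : (0:ℝ) ≤ 1/2)]
    have h2le : (2 : ℝ≥0∞) ^ ((1:ℝ)/2) ≤ 2 := by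
      calc (2 : ℝ≥0∞) ^ ((1:ℝ)/2) ≤ (2 : ℝ≥0∞) ^ (1:ℝ) :=
        ENNReal.rpow_le_rpow_of_exponent_le one_le_two (by norm_num)
        _ = 2 := ENNReal.rpow_one 2
    have huA : u ^ ((1:ℝ)/2) = A ^ ((1:ℝ)/4) := by
      rw [hudef, ← ENNReal.rpow_mul]; norm_num
    have hvle : v ^ ((1:ℝ)/2) ≤ (u + v) ^ ((1:ℝ)/2) :=
      ENNReal.rpow_le_rpow le_add_self (by norm_num)
    calc (2:ℝ≥0∞) ^ ((1:ℝ)/2) * u ^ ((1:ℝ)/2) * v ^ ((1:ℝ)/2)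
        ≤ 2 * A ^ ((1:ℝ)/4) * (u + v) ^ ((1:ℝ)/2) :=
          mul_le_mul' (mul_le_mul' h2le (le_of_eq huA)) hvle
      _ = 2 * (u + v) ^ ((1:ℝ)/2) * A ^ ((1:ℝ)/4) := by rw [mul_right_comm]
  refine le_trans (ENNReal.rpow_le_rpow main2 (by norm_num)) hfinal
end
end

section
/- Let Ω = ℝ² × [-L, L]. Suppose ξ = ξ(x₁,x₂) ∈ H¹(ℝ²) (a function of the horizontal variables only), φ ∈ H¹(Ω), and ψ ∈ L²(Ω). Then ∫_Ω |ξ| |φ| |ψ| dx ≤ C ‖ξ‖_{L²(ℝ²)}^{1/2} (‖ξ‖_{L²(ℝ²)} + ‖∇_h ξ‖_{L²(ℝ²)})^{1/2} ‖φ‖_{L²(Ω)}^{1/2} (‖φ‖_{L²(Ω)} + ‖∇_h φ‖_{L²(Ω)})^{1/2} ‖ψ‖_{L²(Ω)}, where C is a universal constant. -/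
open MeasureTheory

noncomputable section

/-- Coordinate directions in `ℝ²`. -/
def e2 : Fin 2 → ℝ × ℝ
  | 0 => (1, 0)
  | 1 => (0, 1)

/-- Partial derivative `∂g/∂xᵢ` in `ℝ²`. -/
def pd2 (i : Fin 2) (g : ℝ × ℝ → ℝ) (x : ℝ × ℝ) : ℝ := fderiv ℝ g x (e2 i)

lemma oneD (f : ℝ → ℝ) (hf : Differentiable ℝ f)
    (hL2 : ∫⁻ t, ENNReal.ofReal ((f t)^2) ≠ ⊤) (x : ℝ) :
    ENNReal.ofReal ((f x)^2) ≤ 2 * ∫⁻ t, ENNReal.ofReal (|f t * deriv f t|) := by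
  set J := ∫⁻ t, ENNReal.ofReal (|f t * deriv f t|) with hJ
  by_cases hJtop : J = ⊤
  · rw [hJtop]; simp
  set g : ℝ → ℝ := fun t => f t * deriv f t with hg
  have hgmeas : Measurable g :=
    (hf.continuous.measurable).mul (measurable_deriv f)
  have hgint : Integrable g := by
    refine ⟨hgmeas.aestronglyMeasurable, ?_⟩
    rw [hasFiniteIntegral_iff_norm]
    simpa only [Real.norm_eq_abs] using Ne.lt_top hJtop
  have hderiv : ∀ t : ℝ, HasDerivAt (fun s => (f s)^2) (2 * g t) t := by
    intro t
    have := (hf t).hasDerivAt.fun_pow 2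
    refine this.congr_deriv ?_
    simp [hg]; ring
  have hftc : ∀ a b : ℝ, ∫ t in a..b, 2 * g t = (f b)^2 - (f a)^2 := by
    intro a b
    exact intervalIntegral.integral_eq_sub_of_hasDerivAt (fun t _ => hderiv t)
      ((hgint.const_mul 2).intervalIntegrable)
  -- limit of f b ^ 2 at top
  have htendsto : Filter.Tendsto (fun b => (f b)^2) Filter.atTop
      (nhds ((f x)^2 + ∫ t in Set.Ioi x, 2 * g t)) := by
    have h1 : Filter.Tendsto (fun b => ∫ t in x..b, 2 * g t) Filter.atTop
        (nhds (∫ t in Set.Ioi x, 2 * g t)) :=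
      intervalIntegral_tendsto_integral_Ioi x ((hgint.const_mul 2).integrableOn) Filter.tendsto_id
    have : (fun b => (f b)^2) = fun b => (f x)^2 + ∫ t in x..b, 2 * g t := by
      funext b; rw [hftc x b]; ring
    rw [this]
    exact (h1.const_add _)
  set L : ℝ := (f x)^2 + ∫ t in Set.Ioi x, 2 * g t with hL
  have hL0 : L = 0 := by
    by_contra hne
    have hLnonneg : 0 ≤ L :=
      le_of_tendsto_of_tendsto tendsto_const_nhds htendsto
        (Filter.Eventually.of_forall fun b => sq_nonneg (f b))
    have hLpos : 0 < L := lt_of_le_of_ne hLnonneg (Ne.symm hne)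
    have hev : ∀ᶠ b in Filter.atTop, L/2 ≤ (f b)^2 :=
      htendsto.eventually (eventually_ge_nhds (by linarith : L/2 < L))
    obtain ⟨a, ha⟩ := hev.exists_forall_of_atTop
    have hbig : (∫⁻ t in Set.Ici a, ENNReal.ofReal ((f t)^2)) = ⊤ := by
      have h1 : ∫⁻ t in Set.Ici a, ENNReal.ofReal (L/2)
          ≤ ∫⁻ t in Set.Ici a, ENNReal.ofReal ((f t)^2) := by
        refine setLIntegral_mono' measurableSet_Ici fun t ht => ?_
        exact ENNReal.ofReal_le_ofReal (ha t ht)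
      rw [setLIntegral_const, Real.volume_Ici, ENNReal.mul_top] at h1
      · exact top_le_iff.mp h1
      · simpa using (by positivity : (0:ℝ) < L/2)
    exact hL2 (top_le_iff.mp (hbig ▸ setLIntegral_le_lintegral _ _))
  -- f x ^ 2 = - ∫ Ioi
  have hfx : (f x)^2 ≤ ∫ t, |2 * g t| := by
    have h1 : (f x)^2 = -(∫ t in Set.Ioi x, 2 * g t) := by
      have := hL0; rw [hL] at this; linarith
    have h2 : |∫ t in Set.Ioi x, 2 * g t| ≤ ∫ t, |2 * g t| := by
      calc |∫ t in Set.Ioi x, 2 * g t| ≤ ∫ t in Set.Ioi x, |2 * g t| :=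
            by simpa [Real.norm_eq_abs, abs_mul, abs_two] using
              norm_integral_le_integral_norm (μ := volume.restrict (Set.Ioi x))
                (fun t => 2 * g t)
        _ ≤ ∫ t, |2 * g t| :=
            setIntegral_le_integral ((hgint.const_mul 2).abs)
              (Filter.Eventually.of_forall fun t => abs_nonneg _)
    calc (f x)^2 = -(∫ t in Set.Ioi x, 2 * g t) := h1
      _ ≤ |∫ t in Set.Ioi x, 2 * g t| := neg_le_abs _
      _ ≤ ∫ t, |2 * g t| := h2
  have hconv : ENNReal.ofReal (∫ t, |2 * g t|) = 2 * J := by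
    rw [ofReal_integral_eq_lintegral_ofReal ((hgint.const_mul 2).abs)
      (Filter.Eventually.of_forall fun t => abs_nonneg _)]
    rw [hJ, ← lintegral_const_mul' _ _ (by norm_num : (2:ENNReal) ≠ ⊤)]
    congr 1; funext t
    rw [abs_mul, abs_two, ENNReal.ofReal_mul (by norm_num : (0:ℝ) ≤ 2),
      ENNReal.ofReal_ofNat]
  calc ENNReal.ofReal ((f x)^2) ≤ ENNReal.ofReal (∫ t, |2 * g t|) :=
        ENNReal.ofReal_le_ofReal hfx
    _ = 2 * J := hconv

lemma conj22 : Real.HolderConjugate 2 2 := ⟨by norm_num, by norm_num, by norm_num⟩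

lemma cs {α : Type*} [MeasurableSpace α] (μ : Measure α) (f g : α → ENNReal)
    (hf : AEMeasurable f μ) (hg : AEMeasurable g μ) :
    ∫⁻ a, f a * g a ∂μ
      ≤ (∫⁻ a, (f a) ^ (2:ℝ) ∂μ) ^ ((1:ℝ)/2) * (∫⁻ a, (g a) ^ (2:ℝ) ∂μ) ^ ((1:ℝ)/2) := by
  simpa using ENNReal.lintegral_mul_le_Lp_mul_Lq μ conj22 hf hg

lemma sq_ofReal_abs (a : ℝ) : (ENNReal.ofReal |a|) ^ (2:ℝ) = ENNReal.ofReal (a^2) := by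
  rw [show ((2:ℝ)) = ((2:ℕ):ℝ) by norm_num, ENNReal.rpow_natCast,
    ← ENNReal.ofReal_pow (abs_nonneg a), sq_abs]

lemma slice0 {u : ℝ × ℝ → ℝ} (hu : Differentiable ℝ u) (x y : ℝ) :
    HasDerivAt (fun s => u (s, y)) (pd2 0 u (x, y)) x := by
  have hc : HasDerivAt (fun s : ℝ => (s, y)) ((1:ℝ), (0:ℝ)) x :=
    (hasDerivAt_id x).prodMk (hasDerivAt_const x y)
  have := (hu (x, y)).hasFDerivAt.comp_hasDerivAt x hc
  simpa [pd2, e2, Function.comp_def] using this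

lemma slice1 {u : ℝ × ℝ → ℝ} (hu : Differentiable ℝ u) (x y : ℝ) :
    HasDerivAt (fun s => u (x, s)) (pd2 1 u (x, y)) y := by
  have hc : HasDerivAt (fun s : ℝ => (x, s)) ((0:ℝ), (1:ℝ)) y :=
    (hasDerivAt_const y x).prodMk (hasDerivAt_id y)
  have := (hu (x, y)).hasFDerivAt.comp_hasDerivAt y hc
  simpa [pd2, e2, Function.comp_def] using this

lemma twoD (u : ℝ × ℝ → ℝ) (hu : Differentiable ℝ u) :
    ∫⁻ p : ℝ × ℝ, ENNReal.ofReal ((u p)^2 * (u p)^2)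
      ≤ 4 * (∫⁻ p : ℝ × ℝ, ENNReal.ofReal ((u p)^2)) *
        ((∫⁻ p : ℝ × ℝ, ENNReal.ofReal ((u p)^2))
          + ∫⁻ p : ℝ × ℝ, ENNReal.ofReal ((pd2 0 u p)^2 + (pd2 1 u p)^2)) := by
  have mu : Measurable u := hu.continuous.measurable
  have m0 : Measurable (pd2 0 u) := measurable_fderiv_apply_const ℝ u (e2 0)
  have m1 : Measurable (pd2 1 u) := measurable_fderiv_apply_const ℝ u (e2 1)
  set A := ∫⁻ p : ℝ × ℝ, ENNReal.ofReal ((u p)^2) with hAdef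
  set D1 := ∫⁻ p : ℝ × ℝ, ENNReal.ofReal ((pd2 0 u p)^2) with hD1def
  set D2 := ∫⁻ p : ℝ × ℝ, ENNReal.ofReal ((pd2 1 u p)^2) with hD2def
  have hDsum : ∫⁻ p : ℝ × ℝ, ENNReal.ofReal ((pd2 0 u p)^2 + (pd2 1 u p)^2) = D1 + D2 := by
    rw [hD1def, hD2def, ← lintegral_add_left (by fun_prop)]
    congr 1; funext p
    rw [ENNReal.ofReal_add (sq_nonneg _) (sq_nonneg _)]
  rw [hDsum]
  by_cases hA : A = ⊤
  · rw [hA]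
    refine le_trans le_top (le_of_eq ?_)
    simp [top_add, ENNReal.mul_top]
  -- main case
  push_neg at hA
  have prodvol : (volume : Measure (ℝ × ℝ)) = (volume : Measure ℝ).prod volume :=
    Measure.volume_eq_prod ℝ ℝ
  set H0 : ℝ × ℝ → ENNReal := fun p => ENNReal.ofReal ((u p)^2) with hH0
  have mH0 : Measurable H0 := by
    exact ENNReal.measurable_ofReal.comp (mu.pow_const 2)
  have hxy : A = ∫⁻ x : ℝ, ∫⁻ y : ℝ, H0 (x, y) := by
    rw [hAdef, prodvol, lintegral_prod _ mH0.aemeasurable]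
  have hyx : A = ∫⁻ y : ℝ, ∫⁻ x : ℝ, H0 (x, y) := by
    rw [hAdef, prodvol, lintegral_prod_symm _ mH0.aemeasurable]
  set F : ℝ → ENNReal := fun y => ∫⁻ x : ℝ, ENNReal.ofReal |u (x, y) * pd2 0 u (x, y)| with hF
  set G : ℝ → ENNReal := fun x => ∫⁻ y : ℝ, ENNReal.ofReal |u (x, y) * pd2 1 u (x, y)| with hG
  have HFm : Measurable fun p : ℝ × ℝ => ENNReal.ofReal |u p * pd2 0 u p| :=
    ENNReal.measurable_ofReal.comp ((mu.mul m0).abs)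
  have HGm : Measurable fun p : ℝ × ℝ => ENNReal.ofReal |u p * pd2 1 u p| :=
    ENNReal.measurable_ofReal.comp ((mu.mul m1).abs)
  have mF : Measurable F := HFm.lintegral_prod_left'
  have mG : Measurable G := HGm.lintegral_prod_right'
  have claim1 : ∀ᵐ y : ℝ, ∀ x : ℝ, ENNReal.ofReal ((u (x, y))^2) ≤ 2 * F y := by
    have hfin : ∀ᵐ y : ℝ, (∫⁻ x : ℝ, H0 (x, y)) ≠ ⊤ := by
      have h := ae_lt_top (mH0.lintegral_prod_left') (by rw [← hyx]; exact hA)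
      filter_upwards [h] with y hy using hy.ne
    filter_upwards [hfin] with y hy
    intro x
    have hdiff : Differentiable ℝ (fun s => u (s, y)) :=
      fun s => (slice0 hu s y).differentiableAt
    have h1 := oneD (fun s => u (s, y)) hdiff hy x
    have h2 : (∫⁻ t : ℝ, ENNReal.ofReal |u (t, y) * deriv (fun s => u (s, y)) t|) = F y := by
      rw [hF]; congr 1; funext t
      rw [(slice0 hu t y).deriv]
    calc ENNReal.ofReal ((u (x, y))^2)
        ≤ 2 * ∫⁻ t : ℝ, ENNReal.ofReal |u (t, y) * deriv (fun s => u (s, y)) t| := h1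
      _ = 2 * F y := by rw [h2]
  have claim2 : ∀ᵐ x : ℝ, ∀ y : ℝ, ENNReal.ofReal ((u (x, y))^2) ≤ 2 * G x := by
    have hfin : ∀ᵐ x : ℝ, (∫⁻ y : ℝ, H0 (x, y)) ≠ ⊤ := by
      have h := ae_lt_top (mH0.lintegral_prod_right') (by rw [← hxy]; exact hA)
      filter_upwards [h] with x hx using hx.ne
    filter_upwards [hfin] with x hx
    intro y
    have hdiff : Differentiable ℝ (fun s => u (x, s)) :=
      fun s => (slice1 hu x s).differentiableAt
    have h1 := oneD (fun s => u (x, s)) hdiff hx y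
    have h2 : (∫⁻ t : ℝ, ENNReal.ofReal |u (x, t) * deriv (fun s => u (x, s)) t|) = G x := by
      rw [hG]; congr 1; funext t
      rw [(slice1 hu x t).deriv]
    calc ENNReal.ofReal ((u (x, y))^2)
        ≤ 2 * ∫⁻ t : ℝ, ENNReal.ofReal |u (x, t) * deriv (fun s => u (x, s)) t| := h1
      _ = 2 * G x := by rw [h2]
  have key : (∫⁻ p : ℝ × ℝ, ENNReal.ofReal ((u p)^2 * (u p)^2))
      ≤ (∫⁻ x : ℝ, 2 * G x) * (∫⁻ y : ℝ, 2 * F y) := by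
    have expand : (∫⁻ p : ℝ × ℝ, ENNReal.ofReal ((u p)^2 * (u p)^2))
        = ∫⁻ x : ℝ, ∫⁻ y : ℝ, H0 (x, y) * H0 (x, y) := by
      have : (fun p : ℝ × ℝ => ENNReal.ofReal ((u p)^2 * (u p)^2)) = fun p => H0 p * H0 p := by
        funext p; rw [hH0, ENNReal.ofReal_mul (sq_nonneg _)]
      rw [this, prodvol, lintegral_prod (fun p : ℝ × ℝ => H0 p * H0 p) ((mH0.mul mH0).aemeasurable)]
    rw [expand]
    calc (∫⁻ x : ℝ, ∫⁻ y : ℝ, H0 (x, y) * H0 (x, y))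
        ≤ ∫⁻ x : ℝ, (2 * G x) * ∫⁻ y : ℝ, 2 * F y := by
          refine lintegral_mono_ae ?_
          filter_upwards [claim2] with x hx
          calc (∫⁻ y : ℝ, H0 (x, y) * H0 (x, y))
              ≤ ∫⁻ y : ℝ, (2 * G x) * (2 * F y) := by
                refine lintegral_mono_ae ?_
                filter_upwards [claim1] with y hy
                exact mul_le_mul' (hx y) (hy x)
            _ = (2 * G x) * ∫⁻ y : ℝ, 2 * F y :=
                lintegral_const_mul _ (measurable_const.mul mF)
      _ = (∫⁻ x : ℝ, 2 * G x) * (∫⁻ y : ℝ, 2 * F y) :=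
          lintegral_mul_const _ (measurable_const.mul mG)
  set I1 := ∫⁻ p : ℝ × ℝ, ENNReal.ofReal |u p * pd2 0 u p| with hI1
  set I2 := ∫⁻ p : ℝ × ℝ, ENNReal.ofReal |u p * pd2 1 u p| with hI2
  have hFint : (∫⁻ y : ℝ, 2 * F y) = 2 * I1 := by
    rw [lintegral_const_mul' _ _ (by norm_num : (2:ENNReal) ≠ ⊤)]
    congr 1
    rw [hI1, prodvol, lintegral_prod_symm _ HFm.aemeasurable]
  have hGint : (∫⁻ x : ℝ, 2 * G x) = 2 * I2 := by
    rw [lintegral_const_mul' _ _ (by norm_num : (2:ENNReal) ≠ ⊤)]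
    congr 1
    rw [hI2, prodvol, lintegral_prod _ HGm.aemeasurable]
  have csI1 : I1 ≤ A ^ ((1:ℝ)/2) * D1 ^ ((1:ℝ)/2) := by
    have : I1 = ∫⁻ p : ℝ × ℝ, ENNReal.ofReal |u p| * ENNReal.ofReal |pd2 0 u p| := by
      rw [hI1]; congr 1; funext p
      rw [abs_mul, ENNReal.ofReal_mul (abs_nonneg _)]
    rw [this]
    calc (∫⁻ p : ℝ × ℝ, ENNReal.ofReal |u p| * ENNReal.ofReal |pd2 0 u p|)
        ≤ (∫⁻ p : ℝ × ℝ, (ENNReal.ofReal |u p|) ^ (2:ℝ)) ^ ((1:ℝ)/2)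
          * (∫⁻ p : ℝ × ℝ, (ENNReal.ofReal |pd2 0 u p|) ^ (2:ℝ)) ^ ((1:ℝ)/2) :=
          cs volume _ _ (ENNReal.measurable_ofReal.comp mu.abs).aemeasurable
            (ENNReal.measurable_ofReal.comp m0.abs).aemeasurable
      _ = A ^ ((1:ℝ)/2) * D1 ^ ((1:ℝ)/2) := by
          rw [show (∫⁻ p : ℝ × ℝ, (ENNReal.ofReal |u p|) ^ (2:ℝ)) = A from by
            rw [hAdef]; exact lintegral_congr fun p => sq_ofReal_abs _]
          rw [show (∫⁻ p : ℝ × ℝ, (ENNReal.ofReal |pd2 0 u p|) ^ (2:ℝ)) = D1 from by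
            rw [hD1def]; exact lintegral_congr fun p => sq_ofReal_abs _]
  have csI2 : I2 ≤ A ^ ((1:ℝ)/2) * D2 ^ ((1:ℝ)/2) := by
    have : I2 = ∫⁻ p : ℝ × ℝ, ENNReal.ofReal |u p| * ENNReal.ofReal |pd2 1 u p| := by
      rw [hI2]; congr 1; funext p
      rw [abs_mul, ENNReal.ofReal_mul (abs_nonneg _)]
    rw [this]
    calc (∫⁻ p : ℝ × ℝ, ENNReal.ofReal |u p| * ENNReal.ofReal |pd2 1 u p|)
        ≤ (∫⁻ p : ℝ × ℝ, (ENNReal.ofReal |u p|) ^ (2:ℝ)) ^ ((1:ℝ)/2)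
          * (∫⁻ p : ℝ × ℝ, (ENNReal.ofReal |pd2 1 u p|) ^ (2:ℝ)) ^ ((1:ℝ)/2) :=
          cs volume _ _ (ENNReal.measurable_ofReal.comp mu.abs).aemeasurable
            (ENNReal.measurable_ofReal.comp m1.abs).aemeasurable
      _ = A ^ ((1:ℝ)/2) * D2 ^ ((1:ℝ)/2) := by
          rw [show (∫⁻ p : ℝ × ℝ, (ENNReal.ofReal |u p|) ^ (2:ℝ)) = A from by
            rw [hAdef]; exact lintegral_congr fun p => sq_ofReal_abs _]
          rw [show (∫⁻ p : ℝ × ℝ, (ENNReal.ofReal |pd2 1 u p|) ^ (2:ℝ)) = D2 from by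
            rw [hD2def]; exact lintegral_congr fun p => sq_ofReal_abs _]
  have e1 : ∀ X : ENNReal, X ^ ((1:ℝ)/2) * X ^ ((1:ℝ)/2) = X := by
    intro X
    rw [← ENNReal.rpow_add_of_nonneg _ _ (by norm_num) (by norm_num)]
    norm_num
  calc (∫⁻ p : ℝ × ℝ, ENNReal.ofReal ((u p)^2 * (u p)^2))
      ≤ (∫⁻ x : ℝ, 2 * G x) * (∫⁻ y : ℝ, 2 * F y) := key
    _ = 4 * (I2 * I1) := by rw [hGint, hFint]; ring
    _ ≤ 4 * ((A ^ ((1:ℝ)/2) * D2 ^ ((1:ℝ)/2)) * (A ^ ((1:ℝ)/2) * D1 ^ ((1:ℝ)/2))) := by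
        gcongr
    _ = 4 * A * (D2 ^ ((1:ℝ)/2) * D1 ^ ((1:ℝ)/2)) := by
        rw [show (A ^ ((1:ℝ)/2) * D2 ^ ((1:ℝ)/2)) * (A ^ ((1:ℝ)/2) * D1 ^ ((1:ℝ)/2))
          = (A ^ ((1:ℝ)/2) * A ^ ((1:ℝ)/2)) * (D2 ^ ((1:ℝ)/2) * D1 ^ ((1:ℝ)/2)) by ring,
          e1 A]
        ring
    _ ≤ 4 * A * (A + (D1 + D2)) := by
        gcongr
        calc D2 ^ ((1:ℝ)/2) * D1 ^ ((1:ℝ)/2)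
            ≤ (D1 + D2) ^ ((1:ℝ)/2) * (D1 + D2) ^ ((1:ℝ)/2) := by
              gcongr
              · exact le_add_self
              · exact self_le_add_right _ _
          _ = D1 + D2 := e1 _
          _ ≤ A + (D1 + D2) := le_add_self


lemma pd_slice0 (φ : ℝ × ℝ × ℝ → ℝ) (hφ : Differentiable ℝ φ) (z : ℝ) (q : ℝ × ℝ) :
    pd2 0 (fun w : ℝ × ℝ => φ (w.1, w.2, z)) q = pd 0 φ (q.1, q.2, z) := by
  have hdiff : Differentiable ℝ (fun w : ℝ × ℝ => φ (w.1, w.2, z)) :=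
    hφ.comp (differentiable_fst.prodMk (differentiable_snd.prodMk (differentiable_const z)))
  have h1 : HasDerivAt (fun s => φ (s, q.2, z))
      (pd2 0 (fun w : ℝ × ℝ => φ (w.1, w.2, z)) q) q.1 := by
    have := slice0 hdiff q.1 q.2
    simpa using this
  have h2 : HasDerivAt (fun s => φ (s, q.2, z)) (pd 0 φ (q.1, q.2, z)) q.1 := by
    have hc : HasDerivAt (fun s : ℝ => (s, q.2, z)) ((1:ℝ), (0:ℝ), (0:ℝ)) q.1 := by
      have := (hasDerivAt_id q.1).prodMk (hasDerivAt_const (𝕜 := ℝ) q.1 ((q.2, z) : ℝ × ℝ))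
      simpa [Prod.mk_zero_zero] using this
    have := (hφ (q.1, q.2, z)).hasFDerivAt.comp_hasDerivAt q.1 hc
    simpa [pd, e3, Function.comp_def] using this
  exact h1.unique h2

lemma pd_slice1 (φ : ℝ × ℝ × ℝ → ℝ) (hφ : Differentiable ℝ φ) (z : ℝ) (q : ℝ × ℝ) :
    pd2 1 (fun w : ℝ × ℝ => φ (w.1, w.2, z)) q = pd 1 φ (q.1, q.2, z) := by
  have hdiff : Differentiable ℝ (fun w : ℝ × ℝ => φ (w.1, w.2, z)) :=
    hφ.comp (differentiable_fst.prodMk (differentiable_snd.prodMk (differentiable_const z)))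
  have h1 : HasDerivAt (fun s => φ (q.1, s, z))
      (pd2 1 (fun w : ℝ × ℝ => φ (w.1, w.2, z)) q) q.2 := by
    have := slice1 hdiff q.1 q.2
    simpa using this
  have h2 : HasDerivAt (fun s => φ (q.1, s, z)) (pd 1 φ (q.1, q.2, z)) q.2 := by
    have hc : HasDerivAt (fun s : ℝ => (q.1, s, z)) ((0:ℝ), (1:ℝ), (0:ℝ)) q.2 := by
      have := (hasDerivAt_const (𝕜 := ℝ) q.2 q.1).prodMk
        ((hasDerivAt_id q.2).prodMk (hasDerivAt_const (𝕜 := ℝ) q.2 z))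
      simpa using this
    have := (hφ (q.1, q.2, z)).hasFDerivAt.comp_hasDerivAt q.2 hc
    simpa [pd, e3, Function.comp_def] using this
  exact h1.unique h2

lemma chan_eq (L : ℝ) : chan L = Set.univ ×ˢ (Set.univ ×ˢ Set.Icc (-L) L) := by
  ext p; simp [chan, Set.mem_prod]

lemma restrict_chan (L : ℝ) :
    (volume : Measure (ℝ × ℝ × ℝ)).restrict (chan L)
      = (volume : Measure ℝ).prod ((volume : Measure ℝ).prod
          ((volume : Measure ℝ).restrict (Set.Icc (-L) L))) := by
  rw [chan_eq, Measure.volume_eq_prod ℝ (ℝ × ℝ), Measure.volume_eq_prod ℝ ℝ,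
    ← Measure.prod_restrict, ← Measure.prod_restrict]
  simp [Measure.restrict_univ]

lemma slice3 (L : ℝ) (H : ℝ × ℝ × ℝ → ENNReal) (hH : Measurable H) :
    (∫⁻ p in chan L, H p)
      = ∫⁻ z in Set.Icc (-L) L, ∫⁻ x : ℝ, ∫⁻ y : ℝ, H (x, y, z) := by
  rw [restrict_chan L]
  set ν := (volume : Measure ℝ).restrict (Set.Icc (-L) L) with hν
  rw [lintegral_prod _ hH.aemeasurable]
  have h1 : ∀ x : ℝ, (∫⁻ q : ℝ × ℝ, H (x, q) ∂((volume : Measure ℝ).prod ν))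
      = ∫⁻ y : ℝ, ∫⁻ z, H (x, y, z) ∂ν := fun x =>
    lintegral_prod _ ((hH.comp (measurable_prodMk_left)).aemeasurable)
  simp_rw [h1]
  have h2 : ∀ x : ℝ, (∫⁻ y : ℝ, ∫⁻ z, H (x, y, z) ∂ν)
      = ∫⁻ z, (∫⁻ y : ℝ, H (x, y, z)) ∂ν := fun x =>
    lintegral_lintegral_swap ((hH.comp (measurable_prodMk_left)).aemeasurable)
  simp_rw [h2]
  have hm : Measurable fun w : (ℝ × ℝ) × ℝ => H (w.1.1, w.2, w.1.2) :=
    hH.comp ((measurable_fst.fst).prodMk ((measurable_snd).prodMk (measurable_fst.snd)))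
  exact lintegral_lintegral_swap hm.lintegral_prod_right'.aemeasurable

lemma sq_ofReal {c : ℝ} (hc : 0 ≤ c) :
    (ENNReal.ofReal c) ^ (2:ℝ) = ENNReal.ofReal (c * c) := by
  rw [show ((2:ℝ)) = ((2:ℕ):ℝ) by norm_num, ENNReal.rpow_natCast,
    ← ENNReal.ofReal_pow hc, sq]

lemma mulr (X Y : ENNReal) : (X*Y) ^ ((1:ℝ)/2) = X ^ ((1:ℝ)/2) * Y ^ ((1:ℝ)/2) :=
  ENNReal.mul_rpow_of_nonneg _ _ (by norm_num)

lemma halfhalf (X : ENNReal) : (X ^ ((1:ℝ)/2)) ^ ((1:ℝ)/2) = X ^ ((1:ℝ)/4) := by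
  rw [← ENNReal.rpow_mul]; norm_num

lemma self_half (X : ENNReal) : X ^ ((1:ℝ)/2) * X ^ ((1:ℝ)/2) = X := by
  rw [← ENNReal.rpow_add_of_nonneg _ _ (by norm_num) (by norm_num)]
  norm_num

lemma four_rpow_half : ((4:ENNReal)) ^ ((1:ℝ)/2) = 2 := by
  rw [show (4:ENNReal) = 2^(2:ℕ) by norm_num, ← ENNReal.rpow_natCast,
    ← ENNReal.rpow_mul]
  norm_num

lemma four_mul_rpow (X Y : ENNReal) :
    (4 * X * Y) ^ ((1:ℝ)/2) = 2 * (X ^ ((1:ℝ)/2) * Y ^ ((1:ℝ)/2)) := by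
  rw [mul_assoc, mulr, mulr, four_rpow_half]

lemma quarter_le (X Y : ENNReal) :
    (X + Y) ^ ((1:ℝ)/4) ≤ (X ^ ((1:ℝ)/2) + Y ^ ((1:ℝ)/2)) ^ ((1:ℝ)/2) := by
  have h := ENNReal.rpow_add_le_add_rpow X Y (by norm_num : (0:ℝ) ≤ 1/2) (by norm_num)
  have h2 := ENNReal.rpow_le_rpow h (by norm_num : (0:ℝ) ≤ 1/2)
  rwa [halfhalf] at h2

/-- Lemma 2.1: the anisotropic trilinear estimate
  `∫_Ω |ξ| |φ| |ψ| ≤ C ‖ξ‖₂^{1/2}(‖ξ‖₂+‖∇_hξ‖₂)^{1/2} ‖φ‖₂^{1/2}(‖φ‖₂+‖∇_hφ‖₂)^{1/2} ‖ψ‖₂`,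
  with `ξ = ξ(x₁,x₂)`, `φ ∈ H¹(Ω)`, `ψ ∈ L²(Ω)`. -/
theorem stmt1 :
    ∃ C : ℝ, 0 < C ∧
      ∀ (L : ℝ), 0 < L →
      ∀ (ξ : ℝ × ℝ → ℝ) (φ : ℝ × ℝ × ℝ → ℝ) (ψ : ℝ × ℝ × ℝ → ℝ),
        Differentiable ℝ ξ →
        Integrable (fun x => (ξ x) ^ 2) →
        Integrable (fun x => (pd2 0 ξ x) ^ 2 + (pd2 1 ξ x) ^ 2) →
        Differentiable ℝ φ →
        IntegrableOn (fun p => (φ p) ^ 2) (chan L) →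
        IntegrableOn (fun p => (pd 0 φ p) ^ 2 + (pd 1 φ p) ^ 2) (chan L) →
        IntegrableOn (fun p => (ψ p) ^ 2) (chan L) →
        (∫⁻ p in chan L, ENNReal.ofReal (|ξ (p.1, p.2.1)| * |φ p| * |ψ p|))
          ≤ ENNReal.ofReal
              (C * (∫ x : ℝ × ℝ, (ξ x) ^ 2) ^ ((1 : ℝ) / 4)
                 * (Real.sqrt (∫ x : ℝ × ℝ, (ξ x) ^ 2)
                      + Real.sqrt (∫ x : ℝ × ℝ, (pd2 0 ξ x) ^ 2 + (pd2 1 ξ x) ^ 2))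
                     ^ ((1 : ℝ) / 2)
                 * (∫ p in chan L, (φ p) ^ 2) ^ ((1 : ℝ) / 4)
                 * (Real.sqrt (∫ p in chan L, (φ p) ^ 2)
                      + Real.sqrt (∫ p in chan L, (pd 0 φ p) ^ 2 + (pd 1 φ p) ^ 2))
                     ^ ((1 : ℝ) / 2)
                 * Real.sqrt (∫ p in chan L, (ψ p) ^ 2)) := by
  refine ⟨2, by norm_num, ?_⟩
  intro L hL ξ φ ψ hξd hξ2 hξg hφd hφ2 hφg hψ2
  have mξ : Measurable ξ := hξd.continuous.measurable
  have mφ : Measurable φ := hφd.continuous.measurable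
  have mξh : Measurable fun p : ℝ × ℝ × ℝ => ξ (p.1, p.2.1) :=
    mξ.comp (measurable_fst.prodMk (measurable_snd.fst))
  have mφ0 : Measurable (pd 0 φ) := measurable_fderiv_apply_const ℝ φ (e3 0)
  have mφ1 : Measurable (pd 1 φ) := measurable_fderiv_apply_const ℝ φ (e3 1)
  set Aξ := ∫⁻ x : ℝ × ℝ, ENNReal.ofReal ((ξ x)^2) with hAξ
  set Bξ := ∫⁻ x : ℝ × ℝ, ENNReal.ofReal ((pd2 0 ξ x)^2 + (pd2 1 ξ x)^2) with hBξ
  set Aφ := ∫⁻ p in chan L, ENNReal.ofReal ((φ p)^2) with hAφ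
  set Bφ := ∫⁻ p in chan L, ENNReal.ofReal ((pd 0 φ p)^2 + (pd 1 φ p)^2) with hBφ
  set Aψ := ∫⁻ p in chan L, ENNReal.ofReal ((ψ p)^2) with hAψ
  have cAξ : ENNReal.ofReal (∫ x : ℝ × ℝ, (ξ x)^2) = Aξ :=
    ofReal_integral_eq_lintegral_ofReal hξ2 (ae_of_all _ fun x => sq_nonneg _)
  have cBξ : ENNReal.ofReal (∫ x : ℝ × ℝ, (pd2 0 ξ x)^2 + (pd2 1 ξ x)^2) = Bξ :=
    ofReal_integral_eq_lintegral_ofReal hξg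
      (ae_of_all _ fun x => add_nonneg (sq_nonneg _) (sq_nonneg _))
  have cAφ : ENNReal.ofReal (∫ p in chan L, (φ p)^2) = Aφ :=
    ofReal_integral_eq_lintegral_ofReal hφ2 (ae_of_all _ fun x => sq_nonneg _)
  have cBφ : ENNReal.ofReal (∫ p in chan L, (pd 0 φ p)^2 + (pd 1 φ p)^2) = Bφ :=
    ofReal_integral_eq_lintegral_ofReal hφg
      (ae_of_all _ fun x => add_nonneg (sq_nonneg _) (sq_nonneg _))
  have cAψ : ENNReal.ofReal (∫ p in chan L, (ψ p)^2) = Aψ :=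
    ofReal_integral_eq_lintegral_ofReal hψ2 (ae_of_all _ fun x => sq_nonneg _)
  have finAξ : Aξ ≠ ⊤ := by rw [← cAξ]; exact ENNReal.ofReal_ne_top
  have finBξ : Bξ ≠ ⊤ := by rw [← cBξ]; exact ENNReal.ofReal_ne_top
  -- Step 1 : Cauchy-Schwarz in all variables
  have hψae : AEMeasurable (fun p => ENNReal.ofReal |ψ p|) (volume.restrict (chan L)) := by
    have h0 : AEMeasurable (fun p => (ψ p)^2) (volume.restrict (chan L)) :=
      hψ2.aemeasurable
    have h1 : AEMeasurable (fun p => |ψ p|) (volume.restrict (chan L)) := by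
      have h2 := Real.continuous_sqrt.measurable.comp_aemeasurable h0
      exact h2.congr (ae_of_all _ fun p => by
        simp [Function.comp, Real.sqrt_sq_eq_abs])
    exact ENNReal.measurable_ofReal.comp_aemeasurable h1
  set T := ∫⁻ p in chan L, ENNReal.ofReal ((ξ (p.1, p.2.1))^2 * (φ p)^2) with hT
  have holder1 : (∫⁻ p in chan L, ENNReal.ofReal (|ξ (p.1, p.2.1)| * |φ p| * |ψ p|))
      ≤ T ^ ((1:ℝ)/2) * Aψ ^ ((1:ℝ)/2) := by
    have e : ∀ p : ℝ × ℝ × ℝ, ENNReal.ofReal (|ξ (p.1, p.2.1)| * |φ p| * |ψ p|)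
        = ENNReal.ofReal |ξ (p.1, p.2.1) * φ p| * ENNReal.ofReal |ψ p| := by
      intro p; rw [← abs_mul, ENNReal.ofReal_mul (abs_nonneg _)]
    rw [lintegral_congr e]
    have hcs := cs (volume.restrict (chan L))
      (fun p => ENNReal.ofReal |ξ (p.1, p.2.1) * φ p|)
      (fun p => ENNReal.ofReal |ψ p|)
      (by exact (ENNReal.measurable_ofReal.comp ((mξh.mul mφ).abs)).aemeasurable) hψae
    refine le_trans hcs (le_of_eq ?_)
    congr 1
    · congr 1
      refine lintegral_congr fun p => ?_
      rw [sq_ofReal_abs, mul_pow]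
    · congr 1
      exact lintegral_congr fun p => sq_ofReal_abs _
  -- Step 2 : slicing in z
  set Az : ℝ → ENNReal := fun z => ∫⁻ q : ℝ × ℝ, ENNReal.ofReal ((φ (q.1, q.2, z))^2) with hAz
  set Bz : ℝ → ENNReal := fun z => ∫⁻ q : ℝ × ℝ,
      ENNReal.ofReal ((pd 0 φ (q.1, q.2, z))^2 + (pd 1 φ (q.1, q.2, z))^2) with hBz
  have prod2 : (volume : Measure (ℝ × ℝ)) = (volume : Measure ℝ).prod volume :=
    Measure.volume_eq_prod ℝ ℝ
  have mAz : Measurable Az := by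
    have hm : Measurable fun w : ℝ × (ℝ × ℝ) => ENNReal.ofReal ((φ (w.2.1, w.2.2, w.1))^2) := by
      refine ENNReal.measurable_ofReal.comp (Measurable.pow_const ?_ 2)
      exact mφ.comp ((measurable_snd.fst).prodMk ((measurable_snd.snd).prodMk measurable_fst))
    exact hm.lintegral_prod_right'
  have mBz : Measurable Bz := by
    have hm : Measurable fun w : ℝ × (ℝ × ℝ) =>
        ENNReal.ofReal ((pd 0 φ (w.2.1, w.2.2, w.1))^2 + (pd 1 φ (w.2.1, w.2.2, w.1))^2) := by
      have hr : Measurable fun w : ℝ × (ℝ × ℝ) => ((w.2.1, w.2.2, w.1) : ℝ × ℝ × ℝ) :=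
        (measurable_snd.fst).prodMk ((measurable_snd.snd).prodMk measurable_fst)
      exact ENNReal.measurable_ofReal.comp
        (((mφ0.comp hr).pow_const 2).add ((mφ1.comp hr).pow_const 2))
    exact hm.lintegral_prod_right'
  have step : ∀ z : ℝ, (∫⁻ x : ℝ, ∫⁻ y : ℝ, ENNReal.ofReal ((ξ (x, y))^2 * (φ (x, y, z))^2))
      ≤ (4 * Aξ * (Aξ + Bξ)) ^ ((1:ℝ)/2) * (4 * Az z * (Az z + Bz z)) ^ ((1:ℝ)/2) := by
    intro z
    set uz : ℝ × ℝ → ℝ := fun w => φ (w.1, w.2, z) with huz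
    have hud : Differentiable ℝ uz :=
      hφd.comp (differentiable_fst.prodMk (differentiable_snd.prodMk (differentiable_const z)))
    have muz : Measurable uz := hud.continuous.measurable
    have expand : (∫⁻ x : ℝ, ∫⁻ y : ℝ, ENNReal.ofReal ((ξ (x, y))^2 * (φ (x, y, z))^2))
        = ∫⁻ q : ℝ × ℝ, ENNReal.ofReal ((ξ q)^2) * ENNReal.ofReal ((uz q)^2) := by
      have h1 : (∫⁻ q : ℝ × ℝ, ENNReal.ofReal ((ξ q)^2) * ENNReal.ofReal ((uz q)^2))
          = ∫⁻ x : ℝ, ∫⁻ y : ℝ,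
              ENNReal.ofReal ((ξ (x, y))^2) * ENNReal.ofReal ((uz (x, y))^2) := by
        have hmm : Measurable fun q : ℝ × ℝ =>
            ENNReal.ofReal ((ξ q)^2) * ENNReal.ofReal ((uz q)^2) := by
          exact (ENNReal.measurable_ofReal.comp (mξ.pow_const 2)).mul
            (ENNReal.measurable_ofReal.comp (muz.pow_const 2))
        rw [prod2, lintegral_prod _ hmm.aemeasurable]
      rw [h1]
      refine lintegral_congr fun x => lintegral_congr fun y => ?_
      rw [ENNReal.ofReal_mul (sq_nonneg _)]
    rw [expand]
    have hcs := cs volume (fun q => ENNReal.ofReal ((ξ q)^2))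
      (fun q => ENNReal.ofReal ((uz q)^2))
      (by exact (ENNReal.measurable_ofReal.comp (mξ.pow_const 2)).aemeasurable)
      (by exact (ENNReal.measurable_ofReal.comp (muz.pow_const 2)).aemeasurable)
    refine le_trans hcs ?_
    have lad1 : (∫⁻ q : ℝ × ℝ, (ENNReal.ofReal ((ξ q)^2)) ^ (2:ℝ)) ≤ 4 * Aξ * (Aξ + Bξ) := by
      calc (∫⁻ q : ℝ × ℝ, (ENNReal.ofReal ((ξ q)^2)) ^ (2:ℝ))
          = ∫⁻ q : ℝ × ℝ, ENNReal.ofReal ((ξ q)^2 * (ξ q)^2) :=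
            lintegral_congr fun q => sq_ofReal (sq_nonneg _)
        _ ≤ 4 * Aξ * (Aξ + Bξ) := twoD ξ hξd
    have lad2 : (∫⁻ q : ℝ × ℝ, (ENNReal.ofReal ((uz q)^2)) ^ (2:ℝ))
        ≤ 4 * Az z * (Az z + Bz z) := by
      have hB : (∫⁻ q : ℝ × ℝ, ENNReal.ofReal ((pd2 0 uz q)^2 + (pd2 1 uz q)^2)) = Bz z :=
        lintegral_congr fun q => by
          rw [huz, pd_slice0 φ hφd z q, pd_slice1 φ hφd z q]
      have hA : (∫⁻ q : ℝ × ℝ, ENNReal.ofReal ((uz q)^2)) = Az z := rfl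
      calc (∫⁻ q : ℝ × ℝ, (ENNReal.ofReal ((uz q)^2)) ^ (2:ℝ))
          = ∫⁻ q : ℝ × ℝ, ENNReal.ofReal ((uz q)^2 * (uz q)^2) :=
            lintegral_congr fun q => sq_ofReal (sq_nonneg _)
        _ ≤ 4 * (∫⁻ q : ℝ × ℝ, ENNReal.ofReal ((uz q)^2)) *
              ((∫⁻ q : ℝ × ℝ, ENNReal.ofReal ((uz q)^2))
                + ∫⁻ q : ℝ × ℝ, ENNReal.ofReal ((pd2 0 uz q)^2 + (pd2 1 uz q)^2)) :=
            twoD uz hud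
        _ = 4 * Az z * (Az z + Bz z) := by rw [hB, hA]
    exact mul_le_mul' (ENNReal.rpow_le_rpow lad1 (by norm_num))
      (ENNReal.rpow_le_rpow lad2 (by norm_num))
  have hTslice : T = ∫⁻ z in Set.Icc (-L) L, ∫⁻ x : ℝ, ∫⁻ y : ℝ,
      ENNReal.ofReal ((ξ (x, y))^2 * (φ (x, y, z))^2) := by
    rw [hT]
    exact slice3 L (fun p => ENNReal.ofReal ((ξ (p.1, p.2.1))^2 * (φ p)^2))
      (by exact ENNReal.measurable_ofReal.comp ((mξh.pow_const 2).mul (mφ.pow_const 2)))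
  have hAφslice : (∫⁻ z in Set.Icc (-L) L, Az z) = Aφ := by
    have hms : Measurable fun p : ℝ × ℝ × ℝ => ENNReal.ofReal ((φ p)^2) := by
      exact ENNReal.measurable_ofReal.comp (mφ.pow_const 2)
    rw [hAφ, slice3 L (fun p => ENNReal.ofReal ((φ p)^2)) hms]
    refine lintegral_congr fun z => ?_
    show (∫⁻ q : ℝ × ℝ, ENNReal.ofReal ((φ (q.1, q.2, z))^2))
        = ∫⁻ x : ℝ, ∫⁻ y : ℝ, ENNReal.ofReal ((φ (x, y, z))^2)
    have hmm : Measurable fun q : ℝ × ℝ => ENNReal.ofReal ((φ (q.1, q.2, z))^2) := by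
      exact ENNReal.measurable_ofReal.comp ((mφ.comp
        (measurable_fst.prodMk (measurable_snd.prodMk measurable_const))).pow_const 2)
    rw [prod2, lintegral_prod _ hmm.aemeasurable]
  have hBφslice : (∫⁻ z in Set.Icc (-L) L, Bz z) = Bφ := by
    have hms : Measurable fun p : ℝ × ℝ × ℝ =>
        ENNReal.ofReal ((pd 0 φ p)^2 + (pd 1 φ p)^2) := by
      exact ENNReal.measurable_ofReal.comp ((mφ0.pow_const 2).add (mφ1.pow_const 2))
    rw [hBφ, slice3 L (fun p => ENNReal.ofReal ((pd 0 φ p)^2 + (pd 1 φ p)^2)) hms]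
    refine lintegral_congr fun z => ?_
    show (∫⁻ q : ℝ × ℝ, ENNReal.ofReal ((pd 0 φ (q.1, q.2, z))^2 + (pd 1 φ (q.1, q.2, z))^2))
        = ∫⁻ x : ℝ, ∫⁻ y : ℝ, ENNReal.ofReal ((pd 0 φ (x, y, z))^2 + (pd 1 φ (x, y, z))^2)
    have hr : Measurable fun q : ℝ × ℝ => ((q.1, q.2, z) : ℝ × ℝ × ℝ) :=
      measurable_fst.prodMk (measurable_snd.prodMk measurable_const)
    have hmm : Measurable fun q : ℝ × ℝ =>
        ENNReal.ofReal ((pd 0 φ (q.1, q.2, z))^2 + (pd 1 φ (q.1, q.2, z))^2) := by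
      exact ENNReal.measurable_ofReal.comp
        (((mφ0.comp hr).pow_const 2).add ((mφ1.comp hr).pow_const 2))
    rw [prod2, lintegral_prod _ hmm.aemeasurable]
  have hABz : (∫⁻ z in Set.Icc (-L) L, (Az z + Bz z)) = Aφ + Bφ := by
    rw [lintegral_add_left mAz, hAφslice, hBφslice]
  -- Step 3 : combine in z
  have hTbound : T ≤ (2 * (Aξ ^ ((1:ℝ)/2) * (Aξ + Bξ) ^ ((1:ℝ)/2)))
      * (2 * (Aφ ^ ((1:ℝ)/2) * (Aφ + Bφ) ^ ((1:ℝ)/2))) := by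
    set Kξ := (4 * Aξ * (Aξ + Bξ)) ^ ((1:ℝ)/2) with hKξ
    have finKξ : Kξ ≠ ⊤ := ENNReal.rpow_ne_top_of_nonneg (by norm_num)
      (ENNReal.mul_ne_top (ENNReal.mul_ne_top (by norm_num) finAξ)
        (ENNReal.add_ne_top.mpr ⟨finAξ, finBξ⟩))
    have hmrp : Measurable fun z => (Az z) ^ ((1:ℝ)/2) :=
      ENNReal.continuous_rpow_const.measurable.comp mAz
    have hmrp2 : Measurable fun z => (Az z + Bz z) ^ ((1:ℝ)/2) :=
      ENNReal.continuous_rpow_const.measurable.comp (mAz.add mBz)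
    have h2 : ∀ W : ENNReal, (W ^ ((1:ℝ)/2)) ^ (2:ℝ) = W := by
      intro W; rw [← ENNReal.rpow_mul]; norm_num
    calc T = ∫⁻ z in Set.Icc (-L) L, ∫⁻ x : ℝ, ∫⁻ y : ℝ,
          ENNReal.ofReal ((ξ (x, y))^2 * (φ (x, y, z))^2) := hTslice
      _ ≤ ∫⁻ z in Set.Icc (-L) L, Kξ * (4 * Az z * (Az z + Bz z)) ^ ((1:ℝ)/2) :=
          lintegral_mono fun z => step z
      _ = Kξ * ∫⁻ z in Set.Icc (-L) L, (4 * Az z * (Az z + Bz z)) ^ ((1:ℝ)/2) :=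
          lintegral_const_mul' _ _ finKξ
      _ = Kξ * ∫⁻ z in Set.Icc (-L) L,
            2 * ((Az z) ^ ((1:ℝ)/2) * (Az z + Bz z) ^ ((1:ℝ)/2)) := by
          congr 1
          exact lintegral_congr fun z => four_mul_rpow _ _
      _ = Kξ * (2 * ∫⁻ z in Set.Icc (-L) L,
            (Az z) ^ ((1:ℝ)/2) * (Az z + Bz z) ^ ((1:ℝ)/2)) := by
          rw [lintegral_const_mul' _ _ (by norm_num : (2:ENNReal) ≠ ⊤)]
      _ ≤ Kξ * (2 * (Aφ ^ ((1:ℝ)/2) * (Aφ + Bφ) ^ ((1:ℝ)/2))) := by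
          refine mul_le_mul_right (mul_le_mul_right ?_ 2) Kξ
          have hcs := cs (volume.restrict (Set.Icc (-L) L))
            (fun z => (Az z) ^ ((1:ℝ)/2)) (fun z => (Az z + Bz z) ^ ((1:ℝ)/2))
            hmrp.aemeasurable hmrp2.aemeasurable
          refine le_trans hcs (le_of_eq ?_)
          congr 1
          · congr 1
            exact (lintegral_congr fun z => h2 (Az z)).trans hAφslice
          · congr 1
            exact (lintegral_congr fun z => h2 (Az z + Bz z)).trans hABz
      _ = (2 * (Aξ ^ ((1:ℝ)/2) * (Aξ + Bξ) ^ ((1:ℝ)/2)))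
          * (2 * (Aφ ^ ((1:ℝ)/2) * (Aφ + Bφ) ^ ((1:ℝ)/2))) := by
          rw [hKξ, four_mul_rpow]
  -- Step 4 : final algebra and comparison with the RHS
  have combined : ∀ X Y Z W : ENNReal,
      ((2 * (X ^ ((1:ℝ)/2) * Y ^ ((1:ℝ)/2))) * (2 * (Z ^ ((1:ℝ)/2) * W ^ ((1:ℝ)/2)))) ^ ((1:ℝ)/2)
        = 2 * (X ^ ((1:ℝ)/4) * Y ^ ((1:ℝ)/4) * (Z ^ ((1:ℝ)/4) * W ^ ((1:ℝ)/4))) := by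
    intro X Y Z W
    rw [mulr, mulr 2, mulr 2, mulr (X ^ ((1:ℝ)/2)), mulr (Z ^ ((1:ℝ)/2)),
      halfhalf, halfhalf, halfhalf, halfhalf]
    have hre : ((2:ENNReal) ^ ((1:ℝ)/2) * (X ^ ((1:ℝ)/4) * Y ^ ((1:ℝ)/4)))
        * ((2:ENNReal) ^ ((1:ℝ)/2) * (Z ^ ((1:ℝ)/4) * W ^ ((1:ℝ)/4)))
        = ((2:ENNReal) ^ ((1:ℝ)/2) * (2:ENNReal) ^ ((1:ℝ)/2))
          * (X ^ ((1:ℝ)/4) * Y ^ ((1:ℝ)/4) * (Z ^ ((1:ℝ)/4) * W ^ ((1:ℝ)/4))) := by ring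
    rw [hre, self_half]
  set a := ∫ x : ℝ × ℝ, (ξ x)^2 with hadef
  set b := ∫ x : ℝ × ℝ, (pd2 0 ξ x)^2 + (pd2 1 ξ x)^2 with hbdef
  set c := ∫ p in chan L, (φ p)^2 with hcdef
  set d := ∫ p in chan L, (pd 0 φ p)^2 + (pd 1 φ p)^2 with hddef
  set e := ∫ p in chan L, (ψ p)^2 with hedef
  have ha : 0 ≤ a := integral_nonneg fun x => sq_nonneg _
  have hb : 0 ≤ b := integral_nonneg fun x => add_nonneg (sq_nonneg _) (sq_nonneg _)
  have hc : 0 ≤ c := integral_nonneg fun x => sq_nonneg _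
  have hd : 0 ≤ d := integral_nonneg fun x => add_nonneg (sq_nonneg _) (sq_nonneg _)
  have he : 0 ≤ e := integral_nonneg fun x => sq_nonneg _
  have f1 : ENNReal.ofReal (a ^ ((1:ℝ)/4)) = Aξ ^ ((1:ℝ)/4) := by
    rw [← ENNReal.ofReal_rpow_of_nonneg ha (by norm_num), cAξ]
  have f2 : ENNReal.ofReal ((Real.sqrt a + Real.sqrt b) ^ ((1:ℝ)/2))
      = (Aξ ^ ((1:ℝ)/2) + Bξ ^ ((1:ℝ)/2)) ^ ((1:ℝ)/2) := by
    rw [← ENNReal.ofReal_rpow_of_nonneg (by positivity) (by norm_num),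
      ENNReal.ofReal_add (Real.sqrt_nonneg _) (Real.sqrt_nonneg _),
      Real.sqrt_eq_rpow, Real.sqrt_eq_rpow,
      ← ENNReal.ofReal_rpow_of_nonneg ha (by norm_num),
      ← ENNReal.ofReal_rpow_of_nonneg hb (by norm_num), cAξ, cBξ]
  have f3 : ENNReal.ofReal (c ^ ((1:ℝ)/4)) = Aφ ^ ((1:ℝ)/4) := by
    rw [← ENNReal.ofReal_rpow_of_nonneg hc (by norm_num), cAφ]
  have f4 : ENNReal.ofReal ((Real.sqrt c + Real.sqrt d) ^ ((1:ℝ)/2))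
      = (Aφ ^ ((1:ℝ)/2) + Bφ ^ ((1:ℝ)/2)) ^ ((1:ℝ)/2) := by
    rw [← ENNReal.ofReal_rpow_of_nonneg (by positivity) (by norm_num),
      ENNReal.ofReal_add (Real.sqrt_nonneg _) (Real.sqrt_nonneg _),
      Real.sqrt_eq_rpow, Real.sqrt_eq_rpow,
      ← ENNReal.ofReal_rpow_of_nonneg hc (by norm_num),
      ← ENNReal.ofReal_rpow_of_nonneg hd (by norm_num), cAφ, cBφ]
  have f5 : ENNReal.ofReal (Real.sqrt e) = Aψ ^ ((1:ℝ)/2) := by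
    rw [Real.sqrt_eq_rpow, ← ENNReal.ofReal_rpow_of_nonneg he (by norm_num), cAψ]
  have hRHS : ENNReal.ofReal
      (2 * a ^ ((1:ℝ)/4) * (Real.sqrt a + Real.sqrt b) ^ ((1:ℝ)/2)
        * c ^ ((1:ℝ)/4) * (Real.sqrt c + Real.sqrt d) ^ ((1:ℝ)/2) * Real.sqrt e)
      = 2 * (Aξ ^ ((1:ℝ)/4) * (Aξ ^ ((1:ℝ)/2) + Bξ ^ ((1:ℝ)/2)) ^ ((1:ℝ)/2)
          * (Aφ ^ ((1:ℝ)/4) * (Aφ ^ ((1:ℝ)/2) + Bφ ^ ((1:ℝ)/2)) ^ ((1:ℝ)/2)))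
        * Aψ ^ ((1:ℝ)/2) := by
    have n0 : (0:ℝ) ≤ 2 := by norm_num
    have n1 : 0 ≤ 2 * a ^ ((1:ℝ)/4) := mul_nonneg n0 (Real.rpow_nonneg ha _)
    have n2 : 0 ≤ 2 * a ^ ((1:ℝ)/4) * (Real.sqrt a + Real.sqrt b) ^ ((1:ℝ)/2) :=
      mul_nonneg n1 (Real.rpow_nonneg (by positivity) _)
    have n3 : 0 ≤ 2 * a ^ ((1:ℝ)/4) * (Real.sqrt a + Real.sqrt b) ^ ((1:ℝ)/2)
        * c ^ ((1:ℝ)/4) := mul_nonneg n2 (Real.rpow_nonneg hc _)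
    have n4 : 0 ≤ 2 * a ^ ((1:ℝ)/4) * (Real.sqrt a + Real.sqrt b) ^ ((1:ℝ)/2)
        * c ^ ((1:ℝ)/4) * (Real.sqrt c + Real.sqrt d) ^ ((1:ℝ)/2) :=
      mul_nonneg n3 (Real.rpow_nonneg (by positivity) _)
    rw [ENNReal.ofReal_mul n4, ENNReal.ofReal_mul n3, ENNReal.ofReal_mul n2,
      ENNReal.ofReal_mul n1, ENNReal.ofReal_mul n0,
      f1, f2, f3, f4, f5, ENNReal.ofReal_ofNat]
    ring
  calc (∫⁻ p in chan L, ENNReal.ofReal (|ξ (p.1, p.2.1)| * |φ p| * |ψ p|))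
      ≤ T ^ ((1:ℝ)/2) * Aψ ^ ((1:ℝ)/2) := holder1
    _ ≤ (((2 * (Aξ ^ ((1:ℝ)/2) * (Aξ + Bξ) ^ ((1:ℝ)/2)))
          * (2 * (Aφ ^ ((1:ℝ)/2) * (Aφ + Bφ) ^ ((1:ℝ)/2)))) ^ ((1:ℝ)/2)) * Aψ ^ ((1:ℝ)/2) :=
        mul_le_mul_left (ENNReal.rpow_le_rpow hTbound (by norm_num)) _
    _ = 2 * (Aξ ^ ((1:ℝ)/4) * (Aξ + Bξ) ^ ((1:ℝ)/4)
          * (Aφ ^ ((1:ℝ)/4) * (Aφ + Bφ) ^ ((1:ℝ)/4))) * Aψ ^ ((1:ℝ)/2) := by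
        rw [combined]
    _ ≤ 2 * (Aξ ^ ((1:ℝ)/4) * (Aξ ^ ((1:ℝ)/2) + Bξ ^ ((1:ℝ)/2)) ^ ((1:ℝ)/2)
          * (Aφ ^ ((1:ℝ)/4) * (Aφ ^ ((1:ℝ)/2) + Bφ ^ ((1:ℝ)/2)) ^ ((1:ℝ)/2)))
        * Aψ ^ ((1:ℝ)/2) := by
        refine mul_le_mul_left (mul_le_mul_right ?_ 2) _
        exact mul_le_mul' (mul_le_mul_right (quarter_le _ _) _)
          (mul_le_mul_right (quarter_le _ _) _)
    _ = ENNReal.ofReal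
        (2 * a ^ ((1:ℝ)/4) * (Real.sqrt a + Real.sqrt b) ^ ((1:ℝ)/2)
          * c ^ ((1:ℝ)/4) * (Real.sqrt c + Real.sqrt d) ^ ((1:ℝ)/2) * Real.sqrt e) := hRHS.symm
end
end
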